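/- Let C be a (k,r,h) local maximally recoverable code with local group supports S_1, ..., S_{(k+h)/r}. Then for any subset I of {1,...,n}, the columns of a generator matrix of C indexed by I are linearly independent (i.e., ρ(I) = |I|) if and only if |I| ≤ k and |I ∩ S_i| ≤ r for all 1 ≤ i ≤ (k+h)/r. -/

import Mathlib

open Finset

/-- Coordinate index set of a `(k,r,h)` local code with `ℓ = (k+h)/r` local groups:
`Sum.inl t` for `t : Fin (k+h)` are the message symbols (`t < k`) and global parities
(`k ≤ t < k+h`), and `Sum.inr i` is the local parity of the `i`-th local group.
Its cardinality is `n = k + h + ℓ`. -/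
abbrev LIdx (k h ℓ : ℕ) : Type := Fin (k + h) ⊕ Fin ℓ

/-- The support `S_i` of the `i`-th local group: the `r` coordinates
`{ir, ir+1, …, (i+1)r - 1}` together with the `i`-th local parity. -/
def lGroup (k h r ℓ : ℕ) (i : Fin ℓ) : Finset (LIdx k h ℓ) :=
  insert (Sum.inr i)
    ((Finset.univ.filter fun t : Fin (k + h) =>
      (i : ℕ) * r ≤ (t : ℕ) ∧ (t : ℕ) < ((i : ℕ) + 1) * r).image Sum.inl)

/-- The `j`-th coordinate of the `i`-th local group among the first `k + h` coordinates. -/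
def lCoord (k h r ℓ : ℕ) (hkh : k + h = ℓ * r) (i : Fin ℓ) (j : Fin r) : Fin (k + h) :=
  ⟨(i : ℕ) * r + (j : ℕ), by
    have hi : (i : ℕ) + 1 ≤ ℓ := i.2
    have hj : (j : ℕ) < r := j.2
    have h1 : ((i : ℕ) + 1) * r ≤ ℓ * r := Nat.mul_le_mul_right r hi
    have h2 : ((i : ℕ) + 1) * r = (i : ℕ) * r + r := by ring
    omega⟩

/-- `ρ(U)`: the dimension of the projection of the code `C` onto the coordinates in `U`
(equivalently, the rank of the corresponding columns of a generator matrix of `C`). -/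
noncomputable def lRho (k h ℓ : ℕ) (F : Type) [Field F]
    (C : Submodule F (LIdx k h ℓ → F)) (U : Finset (LIdx k h ℓ)) : ℕ :=
  Module.finrank F (C.map (LinearMap.funLeft F F (Subtype.val : ↥U → LIdx k h ℓ)))

/-!
Choose `r` coordinates from every local group so as to cover `I`; the resulting set `E` of
`k + h` coordinates carries an MDS code of dimension `k`, and in an MDS code of length `k + h`
and distance `h + 1` every `k` coordinates form an information set. Conversely, the projection
onto independent coordinates is surjective, so at most `dim C = k` of them exist, and a whole
local group is never independent because its local parity is determined by the other `r`
symbols.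
-/

section LinearProjections

open LinearMap

variable {ι F : Type*} [Field F]

theorem finrank_eq_card_of_existsUnique_comp {β : Type*} [Fintype β]
    (C : Submodule F (ι → F)) (g : β → ι)
    (hsys : ∀ x : β → F, ∃! c : ι → F, c ∈ C ∧ ∀ j, c (g j) = x j) :
    Module.finrank F C = Fintype.card β := by
  have hbij : Function.Bijective ((funLeft F F g).domRestrict C) := by
    constructor
    · intro c c' hcc
      obtain ⟨d, -, hd⟩ := hsys (c.1 ∘ g)
      exact Subtype.ext ((hd c ⟨c.2, fun _ => rfl⟩).trans
        (hd c' ⟨c'.2, fun j => (congrFun hcc j).symm⟩).symm)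
    · intro x
      obtain ⟨c, ⟨hc, hcx⟩, -⟩ := hsys x
      exact ⟨⟨c, hc⟩, funext hcx⟩
  rw [(LinearEquiv.ofBijective _ hbij).finrank_eq, Module.finrank_fintype_fun_eq_card]

theorem finrank_map_funLeft_val_eq_card_iff (C : Submodule F (ι → F)) (U : Finset ι) :
    Module.finrank F (C.map (funLeft F F (Subtype.val : U → ι))) = U.card ↔
      C.map (funLeft F F (Subtype.val : U → ι)) = ⊤ := by
  have hamb : Module.finrank F (U → F) = U.card := by
    rw [Module.finrank_fintype_fun_eq_card, Fintype.card_coe]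
  rw [← hamb]
  exact ⟨Submodule.eq_top_of_finrank_eq, fun h => by rw [h, finrank_top]⟩

theorem map_funLeft_val_of_subset (C : Submodule F (ι → F)) {U V : Finset ι} (hUV : U ⊆ V) :
    C.map (funLeft F F (Subtype.val : U → ι)) =
      (C.map (funLeft F F (Subtype.val : V → ι))).map
        (funLeft F F fun x : U => (⟨x, hUV x.2⟩ : V)) := by
  rw [← Submodule.map_comp, ← funLeft_comp]
  rfl

theorem map_funLeft_val_eq_top_of_subset {C : Submodule F (ι → F)} {U V : Finset ι}
    (hUV : U ⊆ V) (hV : C.map (funLeft F F (Subtype.val : V → ι)) = ⊤) :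
    C.map (funLeft F F (Subtype.val : U → ι)) = ⊤ := by
  rw [map_funLeft_val_of_subset C hUV, hV, Submodule.map_top, range_eq_top]
  exact funLeft_surjective_of_injective _ _ _ fun x y hxy => Subtype.ext congr(($hxy).1)

/-- A nonzero codeword vanishing on `range g` has weight at most `|α| - |β|`, so restriction to
`range g` is injective on `D`; comparing dimensions, it is onto. -/
theorem map_funLeft_eq_top_of_lt_hammingNorm [DecidableEq F] {α β : Type*} [Fintype α]
    [Fintype β] (D : Submodule F (α → F)) {g : β → α} (hg : Function.Injective g)
    (hdim : Module.finrank F D = Fintype.card β)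
    (hdist : ∀ y ∈ D, y ≠ 0 → Fintype.card α - Fintype.card β < hammingNorm y) :
    D.map (funLeft F F g) = ⊤ := by
  classical
  have hinj : Function.Injective ((funLeft F F g).domRestrict D) := by
    rw [← ker_eq_bot, Submodule.eq_bot_iff]
    rintro ⟨y, hy⟩ hker
    have hvanish : ∀ b, y (g b) = 0 := fun b => congrFun hker b
    by_contra hy0
    have hweight : hammingNorm y ≤ Fintype.card α - Fintype.card β := by
      calc hammingNorm y ≤ ((univ.image g)ᶜ).card := by
            refine card_le_card fun x hx => ?_
            simp only [mem_filter, mem_univ, true_and] at hx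
            simp only [mem_compl, mem_image, mem_univ, true_and]
            rintro ⟨b, rfl⟩
            exact hx (hvanish b)
        _ = Fintype.card α - Fintype.card β := by
            rw [card_compl, card_image_of_injective _ hg, card_univ]
    exact (hdist y hy fun h => hy0 (Subtype.ext h)).not_ge hweight
  apply Submodule.eq_top_of_finrank_eq
  rw [← range_domRestrict, finrank_range_of_inj hinj, hdim,
    Module.finrank_fintype_fun_eq_card]

theorem map_funLeft_val_eq_top_of_lt_hammingNorm [DecidableEq F] (C : Submodule F (ι → F))
    {J E : Finset ι} (hJE : J ⊆ E)
    (hdim : Module.finrank F (C.map (funLeft F F (Subtype.val : E → ι))) = J.card)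
    (hdist : ∀ y ∈ C.map (funLeft F F (Subtype.val : E → ι)),
      y ≠ 0 → E.card - J.card < hammingNorm y) :
    C.map (funLeft F F (Subtype.val : J → ι)) = ⊤ := by
  rw [map_funLeft_val_of_subset C hJE]
  refine map_funLeft_eq_top_of_lt_hammingNorm _ (fun x y hxy => Subtype.ext congr(($hxy).1))
    (by rwa [Fintype.card_coe]) ?_
  simpa only [Fintype.card_coe] using hdist

end LinearProjections

section LocalGroups

variable {k h r ℓ : ℕ}

theorem mem_lGroup_inr {i j : Fin ℓ} : Sum.inr j ∈ lGroup k h r ℓ i ↔ j = i := by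
  simp [lGroup]

theorem mem_lGroup_inl {i : Fin ℓ} {t : Fin (k + h)} :
    Sum.inl t ∈ lGroup k h r ℓ i ↔
      (i : ℕ) * r ≤ t ∧ (t : ℕ) < ((i : ℕ) + 1) * r := by
  simp [lGroup]

theorem lCoord_mem_lGroup (hkh : k + h = ℓ * r) (i : Fin ℓ) (j : Fin r) :
    Sum.inl (lCoord k h r ℓ hkh i j) ∈ lGroup k h r ℓ i := by
  rw [mem_lGroup_inl]
  have := j.2
  simp only [lCoord]
  constructor <;> nlinarith

theorem card_lGroup (hkh : k + h = ℓ * r) (i : Fin ℓ) : (lGroup k h r ℓ i).card = r + 1 := by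
  have hsucc : ((i : ℕ) + 1) * r = (i : ℕ) * r + r := by ring
  have hblock : (univ.filter fun t : Fin (k + h) =>
      (i : ℕ) * r ≤ t ∧ (t : ℕ) < ((i : ℕ) + 1) * r) =
        univ.image (lCoord k h r ℓ hkh i) := by
    ext t
    simp only [mem_filter, mem_univ, true_and, mem_image]
    constructor
    · rintro ⟨hlo, hhi⟩
      exact ⟨⟨t - (i : ℕ) * r, by omega⟩, Fin.ext (by simp only [lCoord]; omega)⟩
    · rintro ⟨j, rfl⟩
      simpa only [← mem_lGroup_inl] using lCoord_mem_lGroup hkh i j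
  have hinj : Function.Injective (lCoord k h r ℓ hkh i) := fun j j' hjj' =>
    Fin.ext (by simpa [lCoord] using congr(($hjj' : ℕ)))
  rw [lGroup, card_insert_of_notMem (by simp), hblock,
    card_image_of_injective _ Sum.inl_injective, card_image_of_injective _ hinj,
    card_univ, Fintype.card_fin]

theorem disjoint_lGroup {i j : Fin ℓ} (hij : i ≠ j) :
    Disjoint (lGroup k h r ℓ i) (lGroup k h r ℓ j) := by
  rw [disjoint_left]
  rintro (t | m) hi hj
  · rw [mem_lGroup_inl] at hi hj
    rcases lt_or_gt_of_ne (Fin.val_ne_of_ne hij) with hlt | hlt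
    · have : ((i : ℕ) + 1) * r ≤ j * r := Nat.mul_le_mul_right r hlt
      omega
    · have : ((j : ℕ) + 1) * r ≤ i * r := Nat.mul_le_mul_right r hlt
      omega
  · exact hij ((mem_lGroup_inr.1 hi).symm.trans (mem_lGroup_inr.1 hj))

theorem exists_mem_lGroup (hkh : k + h = ℓ * r) (x : LIdx k h ℓ) :
    ∃ i : Fin ℓ, x ∈ lGroup k h r ℓ i := by
  rcases x with t | m
  · have ht : (t : ℕ) < ℓ * r := hkh ▸ t.2
    have hr : 0 < r := Nat.pos_of_ne_zero fun hr => by simp [hr] at ht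
    refine ⟨⟨t / r, (Nat.div_lt_iff_lt_mul hr).2 ht⟩, mem_lGroup_inl.2 ⟨?_, ?_⟩⟩
    · exact Nat.div_mul_le_self t r
    · rw [add_one_mul]
      have := Nat.div_add_mod (t : ℕ) r
      have := Nat.mod_lt (t : ℕ) hr
      linarith [Nat.mul_comm r (t / r)]
  · exact ⟨m, mem_lGroup_inr.2 rfl⟩

theorem exists_superset_card_inter_lGroup_eq (hkh : k + h = ℓ * r)
    {I : Finset (LIdx k h ℓ)} (hI : ∀ i, (I ∩ lGroup k h r ℓ i).card ≤ r) :
    ∃ E, I ⊆ E ∧ E.card = k + h ∧ ∀ i, (E ∩ lGroup k h r ℓ i).card = r := by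
  choose G hIG hGS hGcard using fun i => exists_subsuperset_card_eq
    inter_subset_right (hI i) (by rw [card_lGroup hkh]; omega)
  have hdisj : (Set.univ : Set (Fin ℓ)).PairwiseDisjoint G :=
    fun i _ j _ hij => (disjoint_lGroup hij).mono (hGS i) (hGS j)
  have hinter : ∀ i, (univ.biUnion G) ∩ lGroup k h r ℓ i = G i := by
    intro i
    refine Subset.antisymm (fun x hx => ?_) fun x hx =>
      mem_inter.2 ⟨mem_biUnion.2 ⟨i, mem_univ _, hx⟩, hGS i hx⟩
    obtain ⟨hxG, hxS⟩ := mem_inter.1 hx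
    obtain ⟨j, -, hxj⟩ := mem_biUnion.1 hxG
    obtain rfl : j = i := by
      by_contra hji
      exact disjoint_left.1 (disjoint_lGroup hji) (hGS j hxj) hxS
    exact hxj
  refine ⟨univ.biUnion G, fun x hx => ?_, ?_, fun i => by rw [hinter, hGcard]⟩
  · obtain ⟨i, hxi⟩ := exists_mem_lGroup hkh x
    exact mem_biUnion.2 ⟨i, mem_univ _, hIG i (mem_inter.2 ⟨hx, hxi⟩)⟩
  · rw [card_biUnion fun i _ j _ hij => hdisj (Set.mem_univ i) (Set.mem_univ j) hij]
    simp [hGcard, hkh]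

/-- The indicator of the local parity is not the restriction of a codeword, since the local
parity of a codeword vanishing on the rest of the group is `0`. -/
theorem map_funLeft_lGroup_ne_top {F : Type*} [Field F] (hkh : k + h = ℓ * r)
    {C : Submodule F (LIdx k h ℓ → F)} {i : Fin ℓ} {a : Fin r → F}
    (hloc : ∀ c ∈ C, c (Sum.inr i) = ∑ j, a j * c (Sum.inl (lCoord k h r ℓ hkh i j))) :
    C.map (LinearMap.funLeft F F (Subtype.val : lGroup k h r ℓ i → LIdx k h ℓ)) ≠ ⊤ := by
  intro htop
  obtain ⟨c, hc, hcy⟩ : Pi.single (⟨Sum.inr i, mem_lGroup_inr.2 rfl⟩ : lGroup k h r ℓ i)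
      (1 : F) ∈ C.map (LinearMap.funLeft F F Subtype.val) := htop ▸ Submodule.mem_top
  have hone : c (Sum.inr i) = 1 := by simpa using congrFun hcy ⟨_, mem_lGroup_inr.2 rfl⟩
  have hzero : ∀ j, c (Sum.inl (lCoord k h r ℓ hkh i j)) = 0 := fun j => by
    simpa using congrFun hcy ⟨_, lCoord_mem_lGroup hkh i j⟩
  simp [hloc c hc, hzero] at hone

end LocalGroups

theorem lRho_eq_card_iff {k h ℓ : ℕ} {F : Type} [Field F] (C : Submodule F (LIdx k h ℓ → F))
    (U : Finset (LIdx k h ℓ)) :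
    lRho k h ℓ F C U = U.card ↔
      C.map (LinearMap.funLeft F F (Subtype.val : U → LIdx k h ℓ)) = ⊤ :=
  finrank_map_funLeft_val_eq_card_iff C U

theorem stmt_4_general (k h r ℓ : ℕ) (hkh : k + h = ℓ * r)
    (F : Type) [Field F] [DecidableEq F]
    (C : Submodule F (LIdx k h ℓ → F))
    -- the first `k` coordinates are the message symbols
    (hsys : ∀ x : Fin k → F, ∃! c : LIdx k h ℓ → F,
      c ∈ C ∧ ∀ j : Fin k, c (Sum.inl (Fin.castLE (Nat.le_add_right k h) j)) = x j)
    -- local parities with nonzero coefficients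
    (a : Fin ℓ → Fin r → F)
    (hloc : ∀ c ∈ C, ∀ i : Fin ℓ,
      c (Sum.inr i) = ∑ j : Fin r, a i j * c (Sum.inl (lCoord k h r ℓ hkh i j)))
    -- maximal recoverability: each admissible puncturing is a [k+h, k, h+1] MDS code
    (hmrc : ∀ E : Finset (LIdx k h ℓ), E.card = k + h →
      (∀ i : Fin ℓ, (E ∩ lGroup k h r ℓ i).card = r) →
      Module.finrank F
          (C.map (LinearMap.funLeft F F (Subtype.val : ↥E → LIdx k h ℓ))) = k ∧
      ∀ y ∈ C.map (LinearMap.funLeft F F (Subtype.val : ↥E → LIdx k h ℓ)),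
        y ≠ 0 → h + 1 ≤ hammingNorm y) :
    ∀ I : Finset (LIdx k h ℓ),
      lRho k h ℓ F C I = I.card ↔
        I.card ≤ k ∧ ∀ i : Fin ℓ, (I ∩ lGroup k h r ℓ i).card ≤ r := by
  intro I
  constructor
  · intro hI
    have htop := (lRho_eq_card_iff C I).1 hI
    refine ⟨?_, fun i => ?_⟩
    · calc I.card = lRho k h ℓ F C I := hI.symm
        _ ≤ Module.finrank F C := Submodule.finrank_map_le _ _
        _ = k := by rw [finrank_eq_card_of_existsUnique_comp C _ hsys, Fintype.card_fin]
    · by_contra! hcard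
      have hsub : lGroup k h r ℓ i ⊆ I := inter_eq_right.1
        (eq_of_subset_of_card_le inter_subset_right (by rw [card_lGroup hkh]; omega))
      exact map_funLeft_lGroup_ne_top hkh (hloc · · i)
        (map_funLeft_val_eq_top_of_subset hsub htop)
  · rintro ⟨hIk, hIS⟩
    obtain ⟨E, hIE, hEcard, hES⟩ := exists_superset_card_inter_lGroup_eq hkh hIS
    obtain ⟨hdimE, hdistE⟩ := hmrc E hEcard hES
    obtain ⟨J, hIJ, hJE, hJcard⟩ := exists_subsuperset_card_eq hIE hIk (by omega)
    refine (lRho_eq_card_iff C I).2 (map_funLeft_val_eq_top_of_subset hIJ ?_)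
    refine map_funLeft_val_eq_top_of_lt_hammingNorm C hJE (hdimE.trans hJcard.symm) ?_
    intro y hy hy0
    have := hdistE y hy hy0
    omega

/-- for a `(k,r,h)` local maximally recoverable code, the columns of a generator
matrix indexed by `I` are linearly independent (`ρ(I) = |I|`) iff `|I| ≤ k` and
`|I ∩ S_i| ≤ r` for every local group `S_i`. -/
theorem stmt_4 (k h r ℓ : ℕ) (hr : 0 < r) (hkh : k + h = ℓ * r) (hk : 0 < k)
    (F : Type) [Field F] [Fintype F] [DecidableEq F]
    (C : Submodule F (LIdx k h ℓ → F))
    -- the first `k` coordinates are the message symbols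
    (hsys : ∀ x : Fin k → F, ∃! c : LIdx k h ℓ → F,
      c ∈ C ∧ ∀ j : Fin k, c (Sum.inl (Fin.castLE (Nat.le_add_right k h) j)) = x j)
    -- local parities with nonzero coefficients
    (a : Fin ℓ → Fin r → F) (ha : ∀ i j, a i j ≠ 0)
    (hloc : ∀ c ∈ C, ∀ i : Fin ℓ,
      c (Sum.inr i) = ∑ j : Fin r, a i j * c (Sum.inl (lCoord k h r ℓ hkh i j)))
    -- maximal recoverability: each admissible puncturing is a [k+h, k, h+1] MDS code
    (hmrc : ∀ E : Finset (LIdx k h ℓ), E.card = k + h →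
      (∀ i : Fin ℓ, (E ∩ lGroup k h r ℓ i).card = r) →
      Module.finrank F
          (C.map (LinearMap.funLeft F F (Subtype.val : ↥E → LIdx k h ℓ))) = k ∧
      ∀ y ∈ C.map (LinearMap.funLeft F F (Subtype.val : ↥E → LIdx k h ℓ)),
        y ≠ 0 → h + 1 ≤ hammingNorm y) :
    ∀ I : Finset (LIdx k h ℓ),
      lRho k h ℓ F C I = I.card ↔
        I.card ≤ k ∧ ∀ i : Fin ℓ, (I ∩ lGroup k h r ℓ i).card ≤ r :=
  stmt_4_general k h r ℓ hkh F C hsys a hloc hmrc
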